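/- Let Γ = (G=(V,E,w), V_Max, V_Min) be a finite mean-payoff game where every vertex has out-degree at least one, let W = max_{e∈E} |w(e)|, and set b = (|V| − 1)·W. Then for every vertex v ∈ V, lb(v) = lwub_b(v), where lb(v) is the minimal initial energy for the lower-bound problem and lwub_b(v) is the minimal initial energy for the lower-weak-upper-bound problem with bound b (both possibly ∞). This relies on the fact that whenever lb(v) < ∞, lb(v) ≤ (|V| − 1)·W. -/

import Mathlib

/-- Max has a (history-dependent) strategy ensuring that every infinite play
from `v` consistent with it keeps `x` plus all prefix sums non-negative
(lower-bound problem). Quantifying over all plays consistent with Max's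
strategy captures `∀` over Min's strategies. -/
def EnsLB {V : Type*} [Fintype V] (E : V → V → Prop) (w : V → V → ℤ)
    (VMax : Set V) (v : V) (x : ℕ) : Prop :=
  ∃ σ : List V → V,
    (∀ (l : List V) (u : V), l.getLast? = some u → u ∈ VMax → E u (σ l)) ∧
    ∀ p : ℕ → V, p 0 = v → (∀ i, E (p i) (p (i + 1))) →
      (∀ i, p i ∈ VMax →
        p (i + 1) = σ (List.ofFn (fun j : Fin (i + 1) => p j))) →
      ∀ n : ℕ, 0 ≤ (x : ℤ) + ∑ i ∈ Finset.range n, w (p i) (p (i + 1))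

/-- Same, additionally requiring that no play segment has weight below `-b`
(lower-weak-upper-bound problem). -/
def EnsLWUB {V : Type*} [Fintype V] (E : V → V → Prop) (w : V → V → ℤ)
    (VMax : Set V) (b : ℕ) (v : V) (x : ℕ) : Prop :=
  ∃ σ : List V → V,
    (∀ (l : List V) (u : V), l.getLast? = some u → u ∈ VMax → E u (σ l)) ∧
    ∀ p : ℕ → V, p 0 = v → (∀ i, E (p i) (p (i + 1))) →
      (∀ i, p i ∈ VMax →
        p (i + 1) = σ (List.ofFn (fun j : Fin (i + 1) => p j))) →
      ((∀ n : ℕ, 0 ≤ (x : ℤ) + ∑ i ∈ Finset.range n, w (p i) (p (i + 1))) ∧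
        ∀ n₁ n₂ : ℕ, n₁ < n₂ →
          -(b : ℤ) ≤ ∑ i ∈ Finset.Ico n₁ n₂, w (p i) (p (i + 1)))

/-- `lb(v)`: minimal initial energy for the lower-bound problem (`⊤` = ∞). -/
noncomputable def lbVal {V : Type*} [Fintype V] (E : V → V → Prop)
    (w : V → V → ℤ) (VMax : Set V) (v : V) : ℕ∞ :=
  sInf {x : ℕ∞ | ∃ n : ℕ, x = (n : ℕ∞) ∧ EnsLB E w VMax v n}

/-- `lwub_b(v)`: minimal initial energy for the lower-weak-upper-bound
problem with bound `b` (`⊤` = ∞). -/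
noncomputable def lwubVal {V : Type*} [Fintype V] (E : V → V → Prop)
    (w : V → V → ℤ) (VMax : Set V) (b : ℕ) (v : V) : ℕ∞ :=
  sInf {x : ℕ∞ | ∃ n : ℕ, x = (n : ℕ∞) ∧ EnsLWUB E w VMax b v n}


/-!
Max starts with an optimal lower-bound strategy and tracks the credit `x + (weight so far)`,
capped at `b`. When the cap is reached at a vertex `u`, the strategy in use still guarantees some
energy from `u`, so `lb(u)` is finite and hence at most `b`; Max restarts from `u` with a strategy
for initial energy `b`. The credit is always the energy guaranteed by the current strategy, so it
stays non-negative; it is at most `b` and grows by at most the weight of each edge, so every segment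
of the play weighs at least `0 - b`.
-/

open Finset

section Plays

variable {V : Type*} {E : V → V → Prop} {w : V → V → ℤ} {VMax : Set V}

def hist (p : ℕ → V) (n : ℕ) : List V := List.ofFn fun j : Fin n => p j

lemma hist_add (p : ℕ → V) (m n : ℕ) :
    hist p (m + n) = hist p m ++ hist (fun j => p (m + j)) n := by
  simp only [hist, List.ofFn_add, Fin.val_castLE, Fin.val_natAdd]

lemma hist_congr {p q : ℕ → V} {n : ℕ} (h : ∀ j < n, p j = q j) : hist p n = hist q n := by
  simp only [hist, List.ofFn_inj]
  exact funext fun j => h j j.2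

@[simp]
lemma length_hist (p : ℕ → V) (n : ℕ) : (hist p n).length = n := List.length_ofFn

lemma getLast?_hist (p : ℕ → V) (n : ℕ) : (hist p (n + 1)).getLast? = some (p n) := by
  rw [hist, List.ofFn_succ_last]
  simp

lemma getD_hist (p : ℕ → V) {n j : ℕ} (hj : j < n) (d : V) : (hist p n).getD j d = p j := by
  simp [hist, hj]

lemma drop_hist (p : ℕ → V) {n r : ℕ} (hr : r ≤ n) :
    (hist p n).drop r = hist (fun j => p (r + j)) (n - r) := by
  conv_lhs => rw [← Nat.add_sub_cancel' hr, hist_add]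
  simp

variable (E w VMax)

def edgeWeight (p : ℕ → V) (i : ℕ) : ℤ := w (p i) (p (i + 1))

def IsLegal (σ : List V → V) : Prop :=
  ∀ (l : List V) (u : V), l.getLast? = some u → u ∈ VMax → E u (σ l)

def IsMove (σ : List V → V) (p : ℕ → V) (i : ℕ) : Prop :=
  E (p i) (p (i + 1)) ∧ (p i ∈ VMax → p (i + 1) = σ (hist p (i + 1)))

def IsPlayUpTo (σ : List V → V) (v : V) (p : ℕ → V) (N : ℕ) : Prop :=
  p 0 = v ∧ ∀ i < N, IsMove E VMax σ p i

def IsPlay (σ : List V → V) (v : V) (p : ℕ → V) : Prop :=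
  p 0 = v ∧ ∀ i, IsMove E VMax σ p i

def Guarantees (σ : List V → V) (v : V) (c : ℤ) : Prop :=
  ∀ p, IsPlay E VMax σ v p → ∀ n, 0 ≤ c + ∑ i ∈ range n, edgeWeight w p i

variable {E w VMax}

lemma isPlay_iff {σ : List V → V} {v : V} {p : ℕ → V} :
    IsPlay E VMax σ v p ↔ p 0 = v ∧ (∀ i, E (p i) (p (i + 1))) ∧
      ∀ i, p i ∈ VMax → p (i + 1) = σ (List.ofFn fun j : Fin (i + 1) => p j) := by
  simp only [IsPlay, IsMove, forall_and, hist]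

lemma ensLB_iff [Fintype V] {v : V} {x : ℕ} :
    EnsLB E w VMax v x ↔ ∃ σ, IsLegal E VMax σ ∧ Guarantees E w VMax σ v x := by
  simp only [EnsLB, Guarantees, isPlay_iff, and_imp, edgeWeight, IsLegal]

lemma Guarantees.mono {σ : List V → V} {v : V} {c c' : ℤ} (h : Guarantees E w VMax σ v c)
    (hc : c ≤ c') : Guarantees E w VMax σ v c' :=
  fun p hp n => (h p hp n).trans (by linarith)

section Extension

variable (VMax)

-- `List.ofFn` rather than `hist` keeps the recursive calls visibly on smaller indices.
open Classical in
noncomputable def followPlay (hE : ∀ v : V, ∃ u, E v u) (σ : List V → V) (v : V) : ℕ → V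
  | 0 => v
  | i + 1 =>
    if followPlay hE σ v i ∈ VMax then σ (List.ofFn fun j : Fin (i + 1) => followPlay hE σ v j)
    else (hE (followPlay hE σ v i)).choose

variable {VMax}

lemma isPlay_followPlay (hE : ∀ v : V, ∃ u, E v u) {σ : List V → V} (hσ : IsLegal E VMax σ)
    (v : V) : IsPlay E VMax σ v (followPlay VMax hE σ v) := by
  refine ⟨by rw [followPlay], fun i => ?_⟩
  by_cases hi : followPlay VMax hE σ v i ∈ VMax
  · have hnext :
        followPlay VMax hE σ v (i + 1) = σ (hist (followPlay VMax hE σ v) (i + 1)) := by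
      rw [followPlay, if_pos hi]; rfl
    exact ⟨hnext ▸ hσ _ _ (getLast?_hist _ i) hi, fun _ => hnext⟩
  · refine ⟨?_, fun h => absurd h hi⟩
    rw [followPlay, if_neg hi]
    exact (hE _).choose_spec

end Extension

lemma Guarantees.nonneg (hE : ∀ v : V, ∃ u, E v u) {σ : List V → V} {v : V} {c : ℤ}
    (hσ : IsLegal E VMax σ) (h : Guarantees E w VMax σ v c) : 0 ≤ c := by
  simpa using h _ (isPlay_followPlay hE hσ v) 0

lemma IsLegal.residual {σ : List V → V} (hσ : IsLegal E VMax σ) (pre : List V) :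
    IsLegal E VMax fun l => σ (pre ++ l) := by
  intro l u hl hu
  refine hσ _ u ?_ hu
  rw [List.getLast?_append, hl]
  rfl

end Plays

section Residual

variable {V : Type*} {E : V → V → Prop} {w : V → V → ℤ} {VMax : Set V}

def splice (q : ℕ → V) (N : ℕ) (p : ℕ → V) (i : ℕ) : V :=
  if i < N then q i else p (i - N)

lemma splice_of_lt {q p : ℕ → V} {N i : ℕ} (hi : i < N) : splice q N p i = q i := if_pos hi

lemma splice_add (q p : ℕ → V) (N j : ℕ) : splice q N p (N + j) = p j := by
  simp [splice]

lemma splice_of_le {q p : ℕ → V} {N i : ℕ} (hN : p 0 = q N) (hi : i ≤ N) :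
    splice q N p i = q i := by
  rcases hi.lt_or_eq with hi | rfl
  · exact splice_of_lt hi
  · simpa using (splice_add q p i 0).trans hN

lemma hist_splice_add (q p : ℕ → V) (N j : ℕ) :
    hist (splice q N p) (N + j) = hist q N ++ hist p j := by
  rw [hist_add, hist_congr fun i hi => splice_of_lt hi]
  simp only [splice_add]

lemma Guarantees.residual {σ : List V → V} {v : V} {c : ℤ} {q : ℕ → V} {N : ℕ}
    (h : Guarantees E w VMax σ v c) (hq : IsPlayUpTo E VMax σ v q N) :
    Guarantees E w VMax (fun l => σ (hist q N ++ l)) (q N)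
      (c + ∑ i ∈ range N, edgeWeight w q i) := by
  intro p ⟨hp0, hp⟩ n
  set P := splice q N p
  have hPq : ∀ i ≤ N, P i = q i := fun i => splice_of_le hp0
  have hP : IsPlay E VMax σ v P := by
    refine ⟨(hPq 0 N.zero_le).trans hq.1, fun i => ?_⟩
    rcases lt_or_ge i N with hi | hi
    · have hhist : hist P (i + 1) = hist q (i + 1) := hist_congr fun j hj => hPq j (by omega)
      simpa only [IsMove, hPq i hi.le, hPq (i + 1) hi, hhist] using hq.2 i hi
    · obtain ⟨j, rfl⟩ := Nat.exists_eq_add_of_le hi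
      simpa only [IsMove, P, add_assoc, splice_add, hist_splice_add] using hp j
  have hsum : ∑ i ∈ range (N + n), edgeWeight w P i =
      ∑ i ∈ range N, edgeWeight w q i + ∑ i ∈ range n, edgeWeight w p i := by
    rw [sum_range_add]
    congr 1
    · exact sum_congr rfl fun i hi => by
        simp only [edgeWeight, hPq i (by simp at hi; omega), hPq (i + 1) (by simp at hi; omega)]
    · simp only [edgeWeight, P, add_assoc, splice_add]
  have := h P hP (N + n)
  linarith

lemma Guarantees.nonneg_of_isPlayUpTo (hE : ∀ v : V, ∃ u, E v u) {σ : List V → V} {v : V}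
    {c : ℤ} {q : ℕ → V} {N : ℕ} (hσ : IsLegal E VMax σ) (h : Guarantees E w VMax σ v c)
    (hq : IsPlayUpTo E VMax σ v q N) : 0 ≤ c + ∑ i ∈ range N, edgeWeight w q i :=
  (h.residual hq).nonneg hE (hσ.residual _)

end Residual

section CappedSum

variable (b x : ℤ) (a : ℕ → ℤ)

def cappedSum : ℕ → ℤ
  | 0 => x
  | k + 1 => min b (cappedSum k + a k)

def lastReset : ℕ → ℕ
  | 0 => 0
  | k + 1 => if b ≤ cappedSum b x a k + a k then k + 1 else lastReset k

variable {b x a}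

lemma cappedSum_le (hx : x ≤ b) : ∀ k, cappedSum b x a k ≤ b
  | 0 => hx
  | _ + 1 => min_le_left _ _

lemma cappedSum_sub_le_sum {m n : ℕ} (h : m ≤ n) :
    cappedSum b x a n - cappedSum b x a m ≤ ∑ i ∈ Ico m n, a i := by
  induction n, h using Nat.le_induction with
  | base => simp
  | succ n hmn ih =>
    have : cappedSum b x a (n + 1) ≤ cappedSum b x a n + a n := min_le_right _ _
    rw [sum_Ico_succ_top hmn]
    linarith

lemma sum_bounds_of_cappedSum_nonneg (hx : x ≤ b) (h : ∀ k, 0 ≤ cappedSum b x a k) :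
    (∀ n, 0 ≤ x + ∑ i ∈ range n, a i) ∧
      ∀ m n, m < n → -b ≤ ∑ i ∈ Ico m n, a i := by
  refine ⟨fun n => ?_, fun m n hmn => ?_⟩
  · have := cappedSum_sub_le_sum (b := b) (x := x) (a := a) n.zero_le
    rw [← range_eq_Ico] at this
    linarith [h n, show cappedSum b x a 0 = x from rfl]
  · linarith [cappedSum_sub_le_sum (b := b) (x := x) (a := a) hmn.le, h n,
      cappedSum_le (a := a) hx m]

lemma cappedSum_congr {a' : ℕ → ℤ} {k : ℕ} (h : ∀ i < k, a i = a' i) :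
    cappedSum b x a k = cappedSum b x a' k := by
  induction k with
  | zero => rfl
  | succ k ih => simp only [cappedSum, ih fun i hi => h i (by omega), h k k.lt_succ_self]

lemma lastReset_congr {a' : ℕ → ℤ} {k : ℕ} (h : ∀ i < k, a i = a' i) :
    lastReset b x a k = lastReset b x a' k := by
  induction k with
  | zero => rfl
  | succ k ih =>
    have h' : ∀ i < k, a i = a' i := fun i hi => h i (by omega)
    simp only [lastReset, ih h', cappedSum_congr h', h k k.lt_succ_self]

lemma lastReset_le : ∀ k, lastReset b x a k ≤ k
  | 0 => le_rfl
  | k + 1 => by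
    rw [lastReset]
    split_ifs
    exacts [le_rfl, (lastReset_le k).trans k.le_succ]

lemma lastReset_mono : Monotone (lastReset b x a) := by
  refine monotone_nat_of_le_succ fun k => ?_
  rw [lastReset]
  split_ifs
  exacts [(lastReset_le k).trans k.le_succ, le_rfl]

lemma lastReset_lastReset : ∀ k, lastReset b x a (lastReset b x a k) = lastReset b x a k
  | 0 => rfl
  | k + 1 => by
    by_cases h : b ≤ cappedSum b x a k + a k
    · simp only [lastReset, if_pos h]
    · simp only [lastReset, if_neg h]
      exact lastReset_lastReset k

lemma lastReset_eq_of_le {i k : ℕ} (h₁ : lastReset b x a k ≤ i) (h₂ : i ≤ k) :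
    lastReset b x a i = lastReset b x a k :=
  le_antisymm (lastReset_mono h₂) ((lastReset_lastReset k).symm.le.trans (lastReset_mono h₁))

lemma cappedSum_eq_add_sum : ∀ k,
    cappedSum b x a k =
      cappedSum b x a (lastReset b x a k) + ∑ i ∈ Ico (lastReset b x a k) k, a i
  | 0 => by simp [lastReset]
  | k + 1 => by
    by_cases h : b ≤ cappedSum b x a k + a k
    · simp [lastReset, if_pos h]
    · rw [lastReset, if_neg h, cappedSum, min_eq_right (not_le.mp h).le,
        sum_Ico_succ_top (lastReset_le k), cappedSum_eq_add_sum k]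
      ring

lemma cappedSum_lastReset_of_ne_zero : ∀ {k}, lastReset b x a k ≠ 0 →
    cappedSum b x a (lastReset b x a k) = b
  | 0, h => absurd rfl h
  | k + 1, h => by
    by_cases hk : b ≤ cappedSum b x a k + a k
    · simp only [lastReset, if_pos hk] at h ⊢
      exact min_eq_left hk
    · simp only [lastReset, if_neg hk] at h ⊢
      exact cappedSum_lastReset_of_ne_zero h

end CappedSum

section ResetStrategy

variable {V : Type*} {E : V → V → Prop} {VMax : Set V}
  (w : V → V → ℤ) (σ₀ : List V → V) (τ : V → List V → V)

def segmentStrategy (p : ℕ → V) (r : ℕ) : List V → V := if r = 0 then σ₀ else τ (p r)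

variable (x b : ℤ) (v : V)

def resetStrategy (l : List V) : V :=
  let p := fun j => l.getD j v
  let r := lastReset b x (edgeWeight w p) (l.length - 1)
  segmentStrategy σ₀ τ p r (l.drop r)

variable {σ₀ τ w x b v}

lemma resetStrategy_hist (p : ℕ → V) (k : ℕ) :
    resetStrategy w σ₀ τ x b v (hist p (k + 1)) =
      segmentStrategy σ₀ τ p (lastReset b x (edgeWeight w p) k)
        (hist (fun j => p (lastReset b x (edgeWeight w p) k + j))
          (k + 1 - lastReset b x (edgeWeight w p) k)) := by
  have hp : ∀ j ≤ k, (hist p (k + 1)).getD j v = p j := fun j hj => getD_hist p (by omega) v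
  have hr : lastReset b x (edgeWeight w fun j => (hist p (k + 1)).getD j v) k =
      lastReset b x (edgeWeight w p) k :=
    lastReset_congr fun i hi => by simp only [edgeWeight, hp i hi.le, hp (i + 1) hi]
  have hle := lastReset_le (b := b) (x := x) (a := edgeWeight w p) k
  simp only [resetStrategy, length_hist, Nat.add_sub_cancel, hr, segmentStrategy, hp _ hle,
    drop_hist p (hle.trans k.le_succ)]

lemma IsLegal.segmentStrategy (h₀ : IsLegal E VMax σ₀) (hτ : ∀ u, IsLegal E VMax (τ u))
    (p : ℕ → V) (r : ℕ) : IsLegal E VMax (segmentStrategy σ₀ τ p r) := by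
  unfold _root_.segmentStrategy
  split_ifs
  exacts [h₀, hτ _]

lemma IsLegal.resetStrategy (h₀ : IsLegal E VMax σ₀) (hτ : ∀ u, IsLegal E VMax (τ u)) :
    IsLegal E VMax (resetStrategy w σ₀ τ x b v) := by
  intro l u hl hu
  have hlen : l.length ≠ 0 := by rintro h; simp [List.length_eq_zero_iff.mp h] at hl
  have hr := lastReset_le (b := b) (x := x) (a := edgeWeight w fun j => l.getD j v) (l.length - 1)
  unfold _root_.resetStrategy
  refine h₀.segmentStrategy hτ _ _ _ u ?_ hu
  rw [List.getLast?_drop, if_neg (by omega), hl]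

lemma IsPlay.isPlayUpTo_segment {p : ℕ → V}
    (hp : IsPlay E VMax (resetStrategy w σ₀ τ x b v) v p) (k : ℕ) :
    IsPlayUpTo E VMax (segmentStrategy σ₀ τ p (lastReset b x (edgeWeight w p) k))
      (p (lastReset b x (edgeWeight w p) k))
      (fun j => p (lastReset b x (edgeWeight w p) k + j))
      (k + 1 - lastReset b x (edgeWeight w p) k) := by
  set r := lastReset b x (edgeWeight w p) k
  refine ⟨rfl, fun i hi => ⟨(hp.2 (r + i)).1, fun hmem => ?_⟩⟩
  have hri : lastReset b x (edgeWeight w p) (r + i) = r := lastReset_eq_of_le (by omega) (by omega)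
  have := (hp.2 (r + i)).2 hmem
  rwa [resetStrategy_hist, hri, show r + i + 1 - r = i + 1 by omega] at this

end ResetStrategy

section ResetStrategyCorrect

variable {V : Type*} {E : V → V → Prop} {w : V → V → ℤ} {VMax : Set V}
  {σ₀ : List V → V} {τ : V → List V → V} {x b : ℤ} {v : V}
  (hE : ∀ v : V, ∃ u, E v u) (h₀ : IsLegal E VMax σ₀) (hτ : ∀ u, IsLegal E VMax (τ u))
  (hσ₀ : Guarantees E w VMax σ₀ v x)
  (hτb : ∀ u σ c, IsLegal E VMax σ → Guarantees E w VMax σ u c →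
    Guarantees E w VMax (τ u) u b)
  {p : ℕ → V} (hp : IsPlay E VMax (resetStrategy w σ₀ τ x b v) v p)
include h₀ hτ hσ₀ hτb hp

lemma IsPlay.guarantees_segmentStrategy {r : ℕ} (hr : lastReset b x (edgeWeight w p) r = r) :
    Guarantees E w VMax (segmentStrategy σ₀ τ p r) (p r)
      (cappedSum b x (edgeWeight w p) r) := by
  induction r using Nat.strong_induction_on with
  | _ r ih =>
  rcases r with _ | j
  · simpa [segmentStrategy, cappedSum, hp.1] using hσ₀
  have hres := (ih _ (Nat.lt_succ_of_le (lastReset_le j)) (lastReset_lastReset j)).residual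
    (hp.isPlayUpTo_segment j)
  set r := lastReset b x (edgeWeight w p) j
  have hrj : r ≤ j := lastReset_le j
  simp only [show r + (j + 1 - r) = j + 1 by omega] at hres
  have hb : cappedSum b x (edgeWeight w p) (j + 1) = b := by
    simpa only [hr] using cappedSum_lastReset_of_ne_zero (hr.trans_ne j.succ_ne_zero)
  rw [segmentStrategy, if_neg j.succ_ne_zero, hb]
  exact hτb _ _ _ ((h₀.segmentStrategy hτ p r).residual _) hres

include hE

lemma IsPlay.cappedSum_nonneg (k : ℕ) : 0 ≤ cappedSum b x (edgeWeight w p) k := by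
  set r := lastReset b x (edgeWeight w p) k
  have hrk : r ≤ k := lastReset_le k
  have hsegment :
      IsPlayUpTo E VMax (segmentStrategy σ₀ τ p r) (p r) (fun j => p (r + j)) (k - r) :=
    ⟨rfl, fun i hi => (hp.isPlayUpTo_segment k).2 i (by omega)⟩
  have := (hp.guarantees_segmentStrategy h₀ hτ hσ₀ hτb
    (lastReset_lastReset k)).nonneg_of_isPlayUpTo hE (h₀.segmentStrategy hτ p r) hsegment
  rwa [cappedSum_eq_add_sum k, sum_Ico_eq_sum_range]

end ResetStrategyCorrect

lemma ensLWUB_of_guarantees {V : Type*} [Fintype V] {E : V → V → Prop} {w : V → V → ℤ}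
    {VMax : Set V} {σ₀ : List V → V} {τ : V → List V → V} {x b : ℕ} {v : V}
    (hE : ∀ v : V, ∃ u, E v u) (hxb : x ≤ b) (h₀ : IsLegal E VMax σ₀)
    (hτ : ∀ u, IsLegal E VMax (τ u)) (hσ₀ : Guarantees E w VMax σ₀ v x)
    (hτb : ∀ u σ c, IsLegal E VMax σ → Guarantees E w VMax σ u c →
      Guarantees E w VMax (τ u) u b) :
    EnsLWUB E w VMax b v x :=
  ⟨resetStrategy w σ₀ τ x b v, h₀.resetStrategy hτ, fun _ hp0 hpE hpC =>
    sum_bounds_of_cappedSum_nonneg (by exact_mod_cast hxb)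
      ((isPlay_iff.mpr ⟨hp0, hpE, hpC⟩).cappedSum_nonneg hE h₀ hτ hσ₀ hτb)⟩

section Values

variable {V : Type*} [Fintype V] {E : V → V → Prop} {w : V → V → ℤ} {VMax : Set V}

lemma EnsLB.mono {v : V} {x y : ℕ} (h : EnsLB E w VMax v x) (hxy : x ≤ y) :
    EnsLB E w VMax v y := by
  obtain ⟨σ, hσ, hg⟩ := ensLB_iff.mp h
  exact ensLB_iff.mpr ⟨σ, hσ, hg.mono (by exact_mod_cast hxy)⟩

lemma ensLB_of_lbVal_le {v : V} {m : ℕ} (h : lbVal E w VMax v ≤ m) : EnsLB E w VMax v m := by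
  have hne : {x : ℕ∞ | ∃ n : ℕ, x = n ∧ EnsLB E w VMax v n}.Nonempty := by
    by_contra hempty
    rw [Set.not_nonempty_iff_eq_empty] at hempty
    simp [lbVal, hempty] at h
  obtain ⟨n, hn, hv⟩ := csInf_mem hne
  rw [lbVal, hn] at h
  exact hv.mono (by exact_mod_cast h)

lemma lbVal_le_lwubVal {b : ℕ} {v : V} : lbVal E w VMax v ≤ lwubVal E w VMax b v :=
  sInf_le_sInf fun _ ⟨n, hn, σ, hσ, hg⟩ =>
    ⟨n, hn, σ, hσ, fun p h0 hE hC => (hg p h0 hE hC).1⟩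

lemma exists_strategy_guarantees_of_lbVal_le {b : ℕ} {σ₀ : List V → V}
    (hbound : ∀ u, lbVal E w VMax u ≠ ⊤ → lbVal E w VMax u ≤ b)
    (h₀ : IsLegal E VMax σ₀) (u : V) :
    ∃ τ, IsLegal E VMax τ ∧
      ∀ σ c, IsLegal E VMax σ → Guarantees E w VMax σ u c →
        Guarantees E w VMax τ u b := by
  by_cases hu : ∃ σ c, IsLegal E VMax σ ∧ Guarantees E w VMax σ u c
  · obtain ⟨σ, c, hσ, hg⟩ := hu
    have hc : EnsLB E w VMax u c.toNat :=
      ensLB_iff.mpr ⟨σ, hσ, hg.mono (Int.self_le_toNat c)⟩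
    have hfin : lbVal E w VMax u ≠ ⊤ :=
      ne_top_of_le_ne_top (ENat.natCast_ne_top _) (sInf_le ⟨_, rfl, hc⟩)
    obtain ⟨τ, hτ, hτb⟩ := ensLB_iff.mp (ensLB_of_lbVal_le (hbound u hfin))
    exact ⟨τ, hτ, fun _ _ _ _ => hτb⟩
  · exact ⟨σ₀, h₀, fun σ c hσ hg => absurd ⟨σ, c, hσ, hg⟩ hu⟩

end Values

theorem stmt_14_general {V : Type*} [Fintype V] (E : V → V → Prop) (w : V → V → ℤ)
    (VMax : Set V) (hE : ∀ v : V, ∃ u, E v u)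
    (W : ℕ)
    (hbound : ∀ v : V, lbVal E w VMax v ≠ ⊤ →
      lbVal E w VMax v ≤ (((Fintype.card V - 1) * W : ℕ) : ℕ∞)) :
    ∀ v : V, lbVal E w VMax v = lwubVal E w VMax ((Fintype.card V - 1) * W) v := by
  intro v
  refine le_antisymm lbVal_le_lwubVal ?_
  cases hv : lbVal E w VMax v with
  | top => exact le_top
  | coe x =>
    have hxb : x ≤ (Fintype.card V - 1) * W := by
      exact_mod_cast hv ▸ hbound v (hv ▸ ENat.natCast_ne_top x)
    obtain ⟨σ₀, h₀, hσ₀⟩ := ensLB_iff.mp (ensLB_of_lbVal_le hv.le)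
    choose τ hτ hτb using exists_strategy_guarantees_of_lbVal_le hbound h₀
    exact sInf_le ⟨x, rfl, ensLWUB_of_guarantees hE hxb h₀ hτ hσ₀ hτb⟩

/-- with `b = (|V| - 1)·W`, for every vertex `lb(v) = lwub_b(v)`,
assuming the bound `lb(v) ≤ (|V| - 1)·W` whenever `lb(v)` is finite. -/
theorem stmt_14 {V : Type*} [Fintype V] (E : V → V → Prop) (w : V → V → ℤ)
    (VMax : Set V) (hE : ∀ v : V, ∃ u, E v u)
    (W : ℕ) (hW : ∀ x y, E x y → (w x y).natAbs ≤ W)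
    (hbound : ∀ v : V, lbVal E w VMax v ≠ ⊤ →
      lbVal E w VMax v ≤ (((Fintype.card V - 1) * W : ℕ) : ℕ∞)) :
    ∀ v : V, lbVal E w VMax v = lwubVal E w VMax ((Fintype.card V - 1) * W) v :=
  stmt_14_general E w VMax hE W hbound
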